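/- arXiv:1809.03716 — 4 statements merged into one kernel-verified Lean document; each statement's English description precedes it below -/
import Mathlib

section
/- Let n be an integer and let F^∗ be a decreasing filtration of V_ℂ by complex subspaces with F^p = V_ℂ for p sufficiently small and F^p = 0 for p sufficiently large, such that for every integer p one has F^p ∩ σ(F^{n+1-p}) = 0 and F^p + σ(F^{n+1-p}) = V_ℂ. Define V^{p,q} := F^p ∩ σ(F^q) for integers p,q with p+q = n. Then V_ℂ is the internal direct sum ⊕_{p+q=n} V^{p,q}, σ(V^{p,q}) = V^{q,p} for all p,q, and F^p = ⊕_{r+s=n, r≥p} V^{r,s} for every p. -/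
open TensorProduct

noncomputable section

namespace MHS

instance : RingHomSurjective (starRingEnd ℂ) :=
  ⟨fun x => ⟨star x, star_star x⟩⟩

variable (V : Type*) [AddCommGroup V] [Module ℝ V]

/-- The inclusion `v ↦ 1 ⊗ v` of `V` into its complexification `ℂ ⊗[ℝ] V`. -/
def incl : V →ₗ[ℝ] ℂ ⊗[ℝ] V := TensorProduct.mk ℝ ℂ V 1

/-- Complex conjugation on the complexification `ℂ ⊗[ℝ] V`, as a
conjugate-linear (i.e. `starRingEnd ℂ`-semilinear) map. -/
def conjC : (ℂ ⊗[ℝ] V) →ₛₗ[starRingEnd ℂ] (ℂ ⊗[ℝ] V) where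
  toFun := LinearMap.rTensor V (Complex.conjAe.toLinearMap : ℂ →ₗ[ℝ] ℂ)
  map_add' := fun x y => map_add _ x y
  map_smul' := by
    intro c x
    induction x using TensorProduct.induction_on with
    | zero => simp
    | tmul a v =>
        simp only [TensorProduct.smul_tmul', LinearMap.rTensor_tmul, smul_eq_mul,
          AlgEquiv.toLinearMap_apply, map_mul, starRingEnd_apply]
        rfl
    | add x y hx hy =>
        simp only [smul_add, map_add]
        exact congrArg₂ (· + ·) hx hy

/-- The complexification `W ⊗ ℂ` of a real subspace `W ⊆ V`, as a complex
subspace of `ℂ ⊗[ℝ] V`. -/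
def cx (W : Submodule ℝ V) : Submodule ℂ (ℂ ⊗[ℝ] V) :=
  Submodule.span ℂ (incl V '' (W : Set V))

variable {V}

/-- `(W, F)` is an `ℝ`-mixed Hodge structure on `V`:  `W` is an increasing
exhaustive filtration of `V` by real subspaces, `F` a decreasing exhaustive
filtration of `ℂ ⊗[ℝ] V` by complex subspaces, and for every `n, p` the induced
filtration on `Gr^W_n = (W n ⊗ ℂ)/(W (n-1) ⊗ ℂ)` satisfies the weight `n`
Hodge decomposition conditions (expressed here at the level of preimages in
`W n ⊗ ℂ` of the relevant subspaces of the quotient). -/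
structure IsRMHS (W : ℤ → Submodule ℝ V) (F : ℤ → Submodule ℂ (ℂ ⊗[ℝ] V)) : Prop where
  monoW : Monotone W
  antiF : Antitone F
  w_bot : ∃ a : ℤ, ∀ i ≤ a, W i = ⊥
  w_top : ∃ b : ℤ, ∀ i, b ≤ i → W i = ⊤
  f_top : ∃ a : ℤ, ∀ p ≤ a, F p = ⊤
  f_bot : ∃ b : ℤ, ∀ p, b ≤ p → F p = ⊥
  gr_inf : ∀ n p : ℤ,
      ((F p ⊓ cx V (W n)) ⊔ cx V (W (n-1))) ⊓
        ((((F (n+1-p)).map (conjC V)) ⊓ cx V (W n)) ⊔ cx V (W (n-1)))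
      = cx V (W (n-1))
  gr_sup : ∀ n p : ℤ,
      (F p ⊓ cx V (W n)) ⊔ ((((F (n+1-p)).map (conjC V)) ⊓ cx V (W n)) ⊔ cx V (W (n-1)))
      = cx V (W n)

/-- The subspace `R^{p,q} = (W_{p+q} ⊗ ℂ) ∩ F^p`. -/
def Rpq (W : ℤ → Submodule ℝ V) (F : ℤ → Submodule ℂ (ℂ ⊗[ℝ] V)) (p q : ℤ) :
    Submodule ℂ (ℂ ⊗[ℝ] V) :=
  cx V (W (p + q)) ⊓ F p

/-- The subspace
`L^{p,q} = (W_{p+q} ⊗ ℂ) ∩ σ(F^q) + Σ_{i ≥ 2} (W_{p+q-i} ⊗ ℂ) ∩ σ(F^{q-i+1})`. -/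
def Lpq (W : ℤ → Submodule ℝ V) (F : ℤ → Submodule ℂ (ℂ ⊗[ℝ] V)) (p q : ℤ) :
    Submodule ℂ (ℂ ⊗[ℝ] V) :=
  (cx V (W (p + q)) ⊓ (F q).map (conjC V)) ⊔
    ⨆ i : ℤ, ⨆ _ : 2 ≤ i, (cx V (W (p + q - i)) ⊓ (F (q - i + 1)).map (conjC V))

/-- The Deligne subspace `I^{p,q} = R^{p,q} ∩ L^{p,q}`. -/
def Ipq (W : ℤ → Submodule ℝ V) (F : ℤ → Submodule ℂ (ℂ ⊗[ℝ] V)) (p q : ℤ) :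
    Submodule ℂ (ℂ ⊗[ℝ] V) :=
  Rpq W F p q ⊓ Lpq W F p q

end MHS


section Aux

variable {V : Type*} [AddCommGroup V] [Module ℝ V]

lemma conjC_conjC' (x : ℂ ⊗[ℝ] V) : MHS.conjC V (MHS.conjC V x) = x := by
  show LinearMap.rTensor V _ (LinearMap.rTensor V _ x) = x
  induction x using TensorProduct.induction_on with
  | zero => simp
  | tmul a v => simp
  | add x y hx hy => simp [hx, hy]

lemma mem_map_conjC' {W : Submodule ℂ (ℂ ⊗[ℝ] V)} {x : ℂ ⊗[ℝ] V} :
    x ∈ W.map (MHS.conjC V) ↔ MHS.conjC V x ∈ W := by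
  constructor
  · rintro ⟨y, hy, rfl⟩; rwa [conjC_conjC']
  · intro h; exact ⟨MHS.conjC V x, h, conjC_conjC' x⟩

end Aux

/-- Conversely, a finite decreasing filtration `F` of `V_ℂ`
with `F^p ∩ σ(F^{n+1-p}) = 0` and `F^p + σ(F^{n+1-p}) = V_ℂ` for all `p`
determines a Hodge decomposition `V^{p,q} = F^p ∩ σ(F^q)` (for `p + q = n`):
`V_ℂ = ⊕_{p+q=n} V^{p,q}`, `σ(V^{p,q}) = V^{q,p}` and
`F^p = ⊕_{r+s=n, r ≥ p} V^{r,s}`. -/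
theorem opposed_filtration_gives_hodge_decomposition
    (V : Type*) [AddCommGroup V] [Module ℝ V] [FiniteDimensional ℝ V]
    (n : ℤ) (F : ℤ → Submodule ℂ (ℂ ⊗[ℝ] V))
    (hanti : Antitone F)
    (htop : ∃ a : ℤ, ∀ p ≤ a, F p = ⊤)
    (hbot : ∃ b : ℤ, ∀ p, b ≤ p → F p = ⊥)
    (hopp : ∀ p : ℤ,
      F p ⊓ (F (n + 1 - p)).map (MHS.conjC V) = ⊥ ∧
      F p ⊔ (F (n + 1 - p)).map (MHS.conjC V) = ⊤)
    (Vpq : ℤ × ℤ → Submodule ℂ (ℂ ⊗[ℝ] V))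
    (hV : ∀ pq : ℤ × ℤ, Vpq pq =
      if pq.1 + pq.2 = n then F pq.1 ⊓ (F pq.2).map (MHS.conjC V) else ⊥) :
    DirectSum.IsInternal Vpq ∧
    (∀ p q : ℤ, (Vpq (p, q)).map (MHS.conjC V) = Vpq (q, p)) ∧
    (∀ p : ℤ, F p = ⨆ rs : ℤ × ℤ, ⨆ _ : rs.1 + rs.2 = n ∧ p ≤ rs.1, Vpq rs) := by
  obtain ⟨a, ha⟩ := htop
  obtain ⟨b, hb⟩ := hbot
  have hV' : ∀ p q : ℤ, Vpq (p, q) =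
      if p + q = n then F p ⊓ (F q).map (MHS.conjC V) else ⊥ := fun p q => hV (p, q)
  have hdisj : ∀ p : ℤ, F p ⊓ (F (n - p + 1)).map (MHS.conjC V) = ⊥ := by
    intro p
    have h := (hopp p).1
    rwa [show n + 1 - p = n - p + 1 by ring] at h
  have hsup : ∀ p : ℤ, F p ⊔ (F (n - p + 1)).map (MHS.conjC V) = ⊤ := by
    intro p
    have h := (hopp p).2
    rwa [show n + 1 - p = n - p + 1 by ring] at h
  -- key decomposition: F p ≤ V^{p, n-p} ⊔ F^{p+1}
  have key : ∀ p : ℤ, F p ≤ Vpq (p, n - p) ⊔ F (p + 1) := by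
    intro p x hx
    have htop' : x ∈ F (p + 1) ⊔ (F (n - p)).map (MHS.conjC V) := by
      have h := hsup (p + 1)
      rw [show n - (p + 1) + 1 = n - p by ring] at h
      rw [h]; trivial
    obtain ⟨f, hf, g, hg, hfg⟩ := Submodule.mem_sup.1 htop'
    have hgF : g ∈ F p := by
      have hgx : g = x - f := by rw [← hfg]; abel
      rw [hgx]
      exact Submodule.sub_mem _ hx (hanti (by omega) hf)
    have hgV : g ∈ Vpq (p, n - p) := by
      rw [hV' p (n - p), if_pos (by ring)]
      exact ⟨hgF, hg⟩
    exact Submodule.mem_sup.2 ⟨g, hgV, f, hf, by rw [← hfg]; abel⟩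
  -- statement 3
  have hSmono : ∀ {p q : ℤ}, p ≤ q →
      (⨆ rs : ℤ × ℤ, ⨆ _ : rs.1 + rs.2 = n ∧ q ≤ rs.1, Vpq rs) ≤
      (⨆ rs : ℤ × ℤ, ⨆ _ : rs.1 + rs.2 = n ∧ p ≤ rs.1, Vpq rs) := by
    intro p q hpq
    exact iSup₂_le fun rs hrs => le_iSup₂_of_le rs ⟨hrs.1, hpq.trans hrs.2⟩ le_rfl
  have hFle : ∀ (k : ℕ) (p : ℤ), b ≤ p + k →
      F p ≤ ⨆ rs : ℤ × ℤ, ⨆ _ : rs.1 + rs.2 = n ∧ p ≤ rs.1, Vpq rs := by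
    intro k
    induction k with
    | zero =>
        intro p hp
        rw [hb p (by omega)]
        exact bot_le
    | succ k ih =>
        intro p hp
        refine (key p).trans (sup_le ?_ ?_)
        · exact le_iSup₂_of_le (p, n - p) ⟨by ring, le_rfl⟩ le_rfl
        · exact (ih (p + 1) (by omega)).trans (hSmono (by omega))
  have hF3 : ∀ p : ℤ, F p = ⨆ rs : ℤ × ℤ, ⨆ _ : rs.1 + rs.2 = n ∧ p ≤ rs.1, Vpq rs := by
    intro p
    refine le_antisymm (hFle (b - p).toNat p (by omega)) (iSup₂_le ?_)
    rintro ⟨r, s⟩ ⟨h1, h2⟩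
    rw [hV' r s, if_pos h1]
    exact inf_le_left.trans (hanti h2)
  -- spanning
  have hspan : ⨆ rs : ℤ × ℤ, Vpq rs = ⊤ := by
    refine top_unique ?_
    calc (⊤ : Submodule ℂ (ℂ ⊗[ℝ] V)) = F a := (ha a le_rfl).symm
      _ = _ := hF3 a
      _ ≤ ⨆ rs : ℤ × ℤ, Vpq rs := iSup₂_le fun rs _ => le_iSup Vpq rs
  -- independence
  have hindep : iSupIndep Vpq := by
    intro pq
    obtain ⟨p, q⟩ := pq
    by_cases hpq : p + q = n
    · have hbound : (⨆ j, ⨆ _ : j ≠ (p, q), Vpq j) ≤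
          F (p + 1) ⊔ (F (n - p + 1)).map (MHS.conjC V) := by
        refine iSup₂_le ?_
        rintro ⟨r, s⟩ hne
        by_cases hrs : r + s = n
        · rw [hV' r s, if_pos hrs]
          have hrp : r ≠ p := by
            intro h
            exact hne (by simp [h, show s = q by omega])
          rcases lt_or_gt_of_ne hrp with h | h
          · exact le_sup_of_le_right
              (inf_le_right.trans (Submodule.map_mono (hanti (by omega))))
          · exact le_sup_of_le_left (inf_le_left.trans (hanti (by omega)))
        · rw [hV' r s, if_neg hrs]
          exact bot_le
      refine Disjoint.mono_right hbound ?_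
      rw [Submodule.disjoint_def]
      intro x hxV hxS
      rw [hV' p q, if_pos hpq] at hxV
      obtain ⟨hxF, hxG⟩ := hxV
      obtain ⟨f, hf, g, hg, hfg⟩ := Submodule.mem_sup.1 hxS
      have hgF : g ∈ F p := by
        have hgx : g = x - f := by rw [← hfg]; abel
        rw [hgx]
        exact Submodule.sub_mem _ hxF (hanti (by omega) hf)
      have hg0 : g = 0 := by
        have hm : g ∈ F p ⊓ (F (n - p + 1)).map (MHS.conjC V) := ⟨hgF, hg⟩
        rw [hdisj p] at hm
        exact hm
      have hxf : x = f := by rw [← hfg, hg0, add_zero]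
      have hm2 : x ∈ F (p + 1) ⊓ (F (n - (p + 1) + 1)).map (MHS.conjC V) := by
        constructor
        · exact hxf ▸ hf
        · rw [show n - (p + 1) + 1 = n - p by ring, show n - p = q by omega]
          exact hxG
      rw [hdisj (p + 1)] at hm2
      exact hm2
    · rw [hV' p q, if_neg hpq]
      exact disjoint_bot_left
  -- conjugation
  have hconj : ∀ p q : ℤ, (Vpq (p, q)).map (MHS.conjC V) = Vpq (q, p) := by
    intro p q
    by_cases h : p + q = n
    · rw [hV' p q, hV' q p, if_pos h, if_pos (by omega)]
      ext x
      simp only [mem_map_conjC', Submodule.mem_inf, conjC_conjC']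
      tauto
    · rw [hV' p q, hV' q p, if_neg h, if_neg (by omega), Submodule.map_bot]
  exact ⟨(DirectSum.isInternal_submodule_iff_iSupIndep_and_iSup_eq_top Vpq).2
    ⟨hindep, hspan⟩, hconj, hF3⟩
end
end

section
/- Let (W_∗, F^∗) be an ℝ-mixed Hodge structure on V. Then V_ℂ is the internal direct sum of the Deligne subspaces: V_ℂ = ⊕_{(p,q) ∈ ℤ×ℤ} I^{p,q} (only finitely many I^{p,q} are nonzero). -/
open TensorProduct

noncomputable section

/-!
The argument lives in the modular, compactly generated lattice of subspaces, with `G = σ(F)` in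
the role of the conjugate filtration. The opposedness of `F` and `G` on `Gr^W_m` gives
`F^p ∩ G^{m+1-p} ∩ W_m ⊆ W_{m-1}`; applied at every weight `m < p + q` it pushes
`I^{p,q} ∩ W_{p+q-1}` down to the bottom of `W`, so it vanishes. Dually
`W_m = F^p ∩ W_m + G^{m+1-p} ∩ W_m + W_{m-1}` with `G^{m+1-p} ∩ W_m ⊆ L^{p,q}`, so
subtracting an element of `F^p ∩ W_m` moves an element of `R^{p,q} ∩ (L^{p,q} + W_m)` into
`L^{p,q} + W_{m-1}`: this lifts `R^{p,q} ∩ (L^{p,q} + W_{p+q-1})` into `I^{p,q} + W_{p+q-1}`, and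
a descending induction on `p` shows that the `I^{p,q}` span. Independence: `I^{p,q}` meets the
span of the `I^{p',q'}` with `(p'+q', p')` lexicographically smaller only inside `W_{p+q-1}`.
-/

theorem iSupIndep_of_disjoint_iSup_rank_lt {ι κ α : Type*} [CompleteLattice α]
    [IsModularLattice α] [IsCompactlyGenerated α] [LinearOrder κ] {f : ι → α} {r : ι → κ}
    (hr : Function.Injective r) (h : ∀ i, Disjoint (f i) (⨆ (j) (_ : r j < r i), f j)) :
    iSupIndep f := by
  classical
  refine iSupIndep_iff_supIndep.mpr fun s => ?_
  induction s using Finset.induction_on_max_value r with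
  | empty => exact Finset.supIndep_empty f
  | insert i s hi hmax ih =>
    refine ih.insert ((h i).mono_right (Finset.sup_le fun j hj => ?_))
    exact le_iSup₂_of_le j ((hmax j hj).lt_of_ne (hr.ne (ne_of_mem_of_not_mem hj hi))) le_rfl

namespace DeligneSplitting

variable {α : Type*} [CompleteLattice α]

def L (W G : ℤ → α) (p q : ℤ) : α :=
  (W (p + q) ⊓ G q) ⊔ ⨆ i : ℤ, ⨆ _ : 2 ≤ i, W (p + q - i) ⊓ G (q - i + 1)

def R (W F : ℤ → α) (p q : ℤ) : α :=
  W (p + q) ⊓ F p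

def I (W F G : ℤ → α) (p q : ℤ) : α :=
  R W F p q ⊓ L W G p q

structure IsMixedOpposed (W F G : ℤ → α) : Prop where
  monoW : Monotone W
  antiF : Antitone F
  antiG : Antitone G
  w_bot : ∃ a : ℤ, ∀ n ≤ a, W n = ⊥
  w_top : ∃ b : ℤ, ∀ n, b ≤ n → W n = ⊤
  f_top : ∃ a : ℤ, ∀ p ≤ a, F p = ⊤
  f_bot : ∃ b : ℤ, ∀ p, b ≤ p → F p = ⊥
  gr_inf : ∀ n p : ℤ,
    ((F p ⊓ W n) ⊔ W (n - 1)) ⊓ ((G (n + 1 - p) ⊓ W n) ⊔ W (n - 1)) = W (n - 1)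
  gr_sup : ∀ n p : ℤ, (F p ⊓ W n) ⊔ ((G (n + 1 - p) ⊓ W n) ⊔ W (n - 1)) = W n

variable {W F G : ℤ → α} {p q m : ℤ}

theorem L_le_W_inf_G_sup_W (hW : Monotone W) (hG : Antitone G) (hm : m < p + q) :
    L W G p q ≤ (W (p + q) ⊓ G (m + 1 - p)) ⊔ W (m - 1) := by
  refine sup_le (le_sup_of_le_left (inf_le_inf_left _ (hG (by omega))))
    (iSup₂_le fun i hi => ?_)
  rcases le_or_gt i (p + q - m) with hi' | hi'
  · exact le_sup_of_le_left (inf_le_inf (hW (by omega)) (hG (by omega)))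
  · exact le_sup_of_le_right (inf_le_left.trans (hW (by omega)))

theorem W_inf_G_le_L (hW : Monotone W) (hG : Antitone G) (hm : m ≤ p + q) :
    W m ⊓ G (m + 1 - p) ≤ L W G p q := by
  rcases le_or_gt (p + q - 1) m with hm' | hm'
  · exact le_sup_of_le_left (inf_le_inf (hW hm) (hG (by omega)))
  · refine le_sup_of_le_right (le_iSup₂_of_le (p + q - m) (by omega) ?_)
    exact inf_le_inf (hW (by omega)) (hG (by omega))

namespace IsMixedOpposed

theorem W_le_F_inf_W_sup_L_sup_W (h : IsMixedOpposed W F G) (hm : m ≤ p + q) :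
    W m ≤ (F p ⊓ W m) ⊔ (L W G p q ⊔ W (m - 1)) := by
  conv_lhs => rw [← h.gr_sup m p]
  have hGL : G (m + 1 - p) ⊓ W m ≤ L W G p q :=
    inf_comm (G _) _ ▸ W_inf_G_le_L h.monoW h.antiG hm
  exact sup_le_sup_left (sup_le_sup_right hGL _) _

section Modular

variable [IsModularLattice α]

theorem I_inf_W_le_W_pred (h : IsMixedOpposed W F G) (hm : m < p + q) :
    I W F G p q ⊓ W m ≤ W (m - 1) := by
  have hF : I W F G p q ⊓ W m ≤ (F p ⊓ W m) ⊔ W (m - 1) :=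
    le_sup_of_le_left (inf_le_inf_right _ (inf_le_left.trans inf_le_right))
  have hG : I W F G p q ⊓ W m ≤ (G (m + 1 - p) ⊓ W m) ⊔ W (m - 1) :=
    calc I W F G p q ⊓ W m ≤ ((W (p + q) ⊓ G (m + 1 - p)) ⊔ W (m - 1)) ⊓ W m :=
          inf_le_inf_right _ (inf_le_right.trans (L_le_W_inf_G_sup_W h.monoW h.antiG hm))
      _ = (W (p + q) ⊓ G (m + 1 - p)) ⊓ W m ⊔ W (m - 1) := by
          rw [sup_comm, sup_inf_assoc_of_le _ (h.monoW (by omega)), sup_comm]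
      _ ≤ (G (m + 1 - p) ⊓ W m) ⊔ W (m - 1) :=
          sup_le_sup_right (inf_le_inf_right _ inf_le_right) _
  exact (le_inf hF hG).trans (h.gr_inf m p).le

theorem I_inf_W_pred_eq_bot (h : IsMixedOpposed W F G) (p q : ℤ) :
    I W F G p q ⊓ W (p + q - 1) = ⊥ := by
  obtain ⟨a, ha⟩ := h.w_bot
  have key : ∀ m ≤ p + q - 1, I W F G p q ⊓ W (p + q - 1) ≤ W m := by
    refine Int.leInductionDown inf_le_right fun m hm ih => ?_
    exact (le_inf inf_le_left ih).trans (h.I_inf_W_le_W_pred (by omega))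
  rw [eq_bot_iff, ← ha (min a (p + q - 1)) (min_le_left _ _)]
  exact key _ (min_le_right _ _)

theorem R_inf_L_sup_W_le_pred (h : IsMixedOpposed W F G) (hm : m ≤ p + q - 1) :
    R W F p q ⊓ (L W G p q ⊔ W m) ≤
      R W F p q ⊓ (L W G p q ⊔ W (m - 1)) ⊔ W (p + q - 1) := by
  have hFW : F p ⊓ W m ≤ R W F p q :=
    le_inf (inf_le_right.trans (h.monoW (by omega))) inf_le_left
  calc R W F p q ⊓ (L W G p q ⊔ W m)
      ≤ R W F p q ⊓ ((F p ⊓ W m) ⊔ (L W G p q ⊔ W (m - 1))) :=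
        inf_le_inf_left _ (sup_le (le_sup_of_le_right le_sup_left)
          (h.W_le_F_inf_W_sup_L_sup_W (by omega)))
    _ = (F p ⊓ W m) ⊔ R W F p q ⊓ (L W G p q ⊔ W (m - 1)) := by
        rw [inf_comm, sup_inf_assoc_of_le _ hFW, inf_comm (L W G p q ⊔ _)]
    _ ≤ R W F p q ⊓ (L W G p q ⊔ W (m - 1)) ⊔ W (p + q - 1) :=
        sup_le (le_sup_of_le_right (inf_le_right.trans (h.monoW hm))) le_sup_left

theorem R_inf_L_sup_W_pred_le_I_sup_W (h : IsMixedOpposed W F G) (p q : ℤ) :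
    R W F p q ⊓ (L W G p q ⊔ W (p + q - 1)) ≤ I W F G p q ⊔ W (p + q - 1) := by
  obtain ⟨a, ha⟩ := h.w_bot
  have key : ∀ m ≤ p + q - 1, R W F p q ⊓ (L W G p q ⊔ W (p + q - 1)) ≤
      R W F p q ⊓ (L W G p q ⊔ W m) ⊔ W (p + q - 1) :=
    Int.leInductionDown le_sup_left fun m hm ih =>
      ih.trans (sup_le (h.R_inf_L_sup_W_le_pred hm) le_sup_right)
  have := key (min a (p + q - 1)) (min_le_right _ _)
  rwa [ha _ (min_le_left _ _), sup_bot_eq] at this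

theorem F_inf_W_le_of_succ (h : IsMixedOpposed W F G) {n : ℤ}
    (hS : F (p + 1) ⊓ W n ≤ (⨆ pq : ℤ × ℤ, I W F G pq.1 pq.2) ⊔ W (n - 1)) :
    F p ⊓ W n ≤ (⨆ pq : ℤ × ℤ, I W F G pq.1 pq.2) ⊔ W (n - 1) := by
  have hlift : R W F p (n - p) ⊓ (L W G p (n - p) ⊔ W (n - 1)) ≤
      I W F G p (n - p) ⊔ W (n - 1) := by
    simpa only [add_sub_cancel] using h.R_inf_L_sup_W_pred_le_I_sup_W p (n - p)
  have hGL : G (n + 1 - (p + 1)) ⊓ W n ≤ L W G p (n - p) :=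
    le_sup_of_le_left (le_inf (inf_le_right.trans (h.monoW (by omega)))
      (inf_le_left.trans (h.antiG (by omega))))
  calc F p ⊓ W n
      = F p ⊓ W n ⊓
          ((F (p + 1) ⊓ W n) ⊔ ((G (n + 1 - (p + 1)) ⊓ W n) ⊔ W (n - 1))) := by
        rw [h.gr_sup, inf_of_le_left inf_le_right]
    _ = (F (p + 1) ⊓ W n) ⊔ F p ⊓ W n ⊓ ((G (n + 1 - (p + 1)) ⊓ W n) ⊔ W (n - 1)) := by
        rw [inf_comm, sup_inf_assoc_of_le _ (inf_le_inf_right _ (h.antiF (by omega))),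
          inf_comm (_ ⊔ _)]
    _ ≤ ((⨆ pq : ℤ × ℤ, I W F G pq.1 pq.2) ⊔ W (n - 1)) ⊔
          (I W F G p (n - p) ⊔ W (n - 1)) := by
        refine sup_le_sup hS (le_trans ?_ hlift)
        have hR : F p ⊓ W n ≤ R W F p (n - p) :=
          le_inf (inf_le_right.trans (h.monoW (by omega))) inf_le_left
        exact le_inf (inf_le_left.trans hR) (inf_le_right.trans (sup_le_sup_right hGL _))
    _ ≤ (⨆ pq : ℤ × ℤ, I W F G pq.1 pq.2) ⊔ W (n - 1) :=
        sup_le le_rfl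
          (sup_le_sup_right (le_iSup (fun pq : ℤ × ℤ => I W F G pq.1 pq.2) (p, n - p)) _)

theorem F_inf_W_le_iSup_I_sup_W (h : IsMixedOpposed W F G) (n p : ℤ) :
    F p ⊓ W n ≤ (⨆ pq : ℤ × ℤ, I W F G pq.1 pq.2) ⊔ W (n - 1) := by
  obtain ⟨b, hb⟩ := h.f_bot
  have key : ∀ p ≤ b, F p ⊓ W n ≤ (⨆ pq : ℤ × ℤ, I W F G pq.1 pq.2) ⊔ W (n - 1) :=
    Int.leInductionDown (by simp [hb b le_rfl]) fun p _ ih =>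
      h.F_inf_W_le_of_succ (by rwa [sub_add_cancel])
  rcases le_total p b with hp | hp
  · exact key p hp
  · simp [hb p hp]

theorem iSup_I_eq_top (h : IsMixedOpposed W F G) :
    ⨆ pq : ℤ × ℤ, I W F G pq.1 pq.2 = ⊤ := by
  obtain ⟨a, ha⟩ := h.w_bot
  obtain ⟨b, hb⟩ := h.w_top
  obtain ⟨c, hc⟩ := h.f_top
  have hW : ∀ n, a ≤ n → W n ≤ ⨆ pq : ℤ × ℤ, I W F G pq.1 pq.2 :=
    Int.leInduction (by simp [ha a le_rfl]) fun n _ ih => by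
      have := h.F_inf_W_le_iSup_I_sup_W (n + 1) c
      rw [hc c le_rfl, top_inf_eq, add_sub_cancel_right] at this
      exact this.trans (sup_le le_rfl ih)
  rw [eq_top_iff, ← hb (max a b) (le_max_right _ _)]
  exact hW _ (le_max_left _ _)

theorem disjoint_I_iSup_lex_lt (h : IsMixedOpposed W F G) (p q : ℤ) :
    Disjoint (I W F G p q)
      (⨆ (j : ℤ × ℤ) (_ : toLex (j.1 + j.2, j.1) < toLex (p + q, p)), I W F G j.1 j.2) := by
  have hlow : ∀ j : ℤ × ℤ, toLex (j.1 + j.2, j.1) < toLex (p + q, p) →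
      I W F G j.1 j.2 ≤ (G (p + q + 1 - p) ⊓ W (p + q)) ⊔ W (p + q - 1) := by
    intro j hj
    rcases Prod.Lex.toLex_lt_toLex.mp hj with hlt | ⟨heq, hlt⟩
    · exact le_sup_of_le_right (inf_le_left.trans (inf_le_left.trans (h.monoW (by omega))))
    · have hL := L_le_W_inf_G_sup_W (p := j.1) (q := j.2) (m := j.1 + j.2 - 1) h.monoW h.antiG
        (by omega)
      refine inf_le_right.trans (hL.trans ?_)
      exact sup_le_sup (le_inf (inf_le_right.trans (h.antiG (by omega)))
        (inf_le_left.trans (h.monoW (by omega)))) (h.monoW (by omega))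
  have hIF : I W F G p q ≤ (F p ⊓ W (p + q)) ⊔ W (p + q - 1) :=
    le_sup_of_le_left (le_inf (inf_le_left.trans inf_le_right) (inf_le_left.trans inf_le_left))
  rw [disjoint_iff, eq_bot_iff, ← h.I_inf_W_pred_eq_bot p q]
  refine le_inf inf_le_left ((inf_le_inf hIF (iSup₂_le hlow)).trans ?_)
  exact (h.gr_inf (p + q) p).le

theorem iSupIndep_I [IsCompactlyGenerated α] (h : IsMixedOpposed W F G) :
    iSupIndep fun pq : ℤ × ℤ => I W F G pq.1 pq.2 := by
  refine iSupIndep_of_disjoint_iSup_rank_lt (r := fun pq => toLex (pq.1 + pq.2, pq.1)) ?_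
    fun pq => h.disjoint_I_iSup_lex_lt pq.1 pq.2
  intro x y hxy
  simp only [toLex_inj, Prod.mk.injEq] at hxy
  ext <;> omega

end Modular

end IsMixedOpposed

end DeligneSplitting

namespace MHS

variable {V : Type*} [AddCommGroup V] [Module ℝ V]

theorem cx_eq_baseChange (A : Submodule ℝ V) : cx V A = A.baseChange ℂ := by
  rw [Submodule.baseChange_eq_span, Submodule.map_coe]
  rfl

theorem IsRMHS.isMixedOpposed {W : ℤ → Submodule ℝ V} {F : ℤ → Submodule ℂ (ℂ ⊗[ℝ] V)}
    (h : IsRMHS W F) :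
    DeligneSplitting.IsMixedOpposed (fun n => cx V (W n)) F (fun q => (F q).map (conjC V)) where
  monoW _ _ hij := by
    simpa only [cx_eq_baseChange] using Submodule.baseChange_mono ℂ (h.monoW hij)
  antiF := h.antiF
  antiG _ _ hij := Submodule.map_mono (h.antiF hij)
  w_bot := h.w_bot.imp fun _ ha n hn => by
    rw [ha n hn, cx_eq_baseChange, Submodule.baseChange_bot]
  w_top := h.w_top.imp fun _ hb n hn => by
    rw [hb n hn, cx_eq_baseChange, Submodule.baseChange_top]
  f_top := h.f_top
  f_bot := h.f_bot
  gr_inf := h.gr_inf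
  gr_sup := h.gr_sup

end MHS

/-- For an `ℝ`-mixed Hodge structure `(W, F)` on `V`, the
complexification `V_ℂ` is the internal direct sum of the Deligne subspaces
`I^{p,q}`, and only finitely many of them are nonzero. -/
theorem deligne_splitting_isInternal
    (V : Type*) [AddCommGroup V] [Module ℝ V] [FiniteDimensional ℝ V]
    (W : ℤ → Submodule ℝ V) (F : ℤ → Submodule ℂ (ℂ ⊗[ℝ] V))
    (h : MHS.IsRMHS W F) :
    DirectSum.IsInternal (fun pq : ℤ × ℤ => MHS.Ipq W F pq.1 pq.2) ∧
    {pq : ℤ × ℤ | MHS.Ipq W F pq.1 pq.2 ≠ ⊥}.Finite := by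
  have hI := h.isMixedOpposed
  have hindep : iSupIndep fun pq : ℤ × ℤ => MHS.Ipq W F pq.1 pq.2 := hI.iSupIndep_I
  have : Module.Finite ℂ (ℂ ⊗[ℝ] V) := Module.Finite.base_change ℝ ℂ V
  exact ⟨(DirectSum.isInternal_submodule_iff_iSupIndep_and_iSup_eq_top _).mpr
    ⟨hindep, hI.iSup_I_eq_top⟩, @Finite.of_fintype _ hindep.fintypeNeBotOfFiniteDimensional⟩
end
end

section
/- Let (W_∗, F^∗) be an ℝ-mixed Hodge structure on V. Then for every integer i one has W_i ⊗ ℂ = ⊕_{p+q ≤ i} I^{p,q}, and for every integer r one has F^r = ⊕_{p ≥ r} I^{p,q}. -/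
open TensorProduct

noncomputable section

/-!
For `m < p + q` the Hodge condition on `Gr^W_m`, split against `F^p`, puts `W_m ⊗ ℂ` inside
`F^p ∩ W_{p+q-1} + L^{p,q}` (this is exactly what the correction terms of `L^{p,q}` are for).
Since `F^p ∩ W_{p+q-1} ⊆ R^{p,q}`, the modular law then gives
`R^{p,q} ∩ (σF^q ∩ W_{p+q} + W_{p+q-1}) ⊆ I^{p,q} + F^p ∩ W_{p+q-1}`.
Combined with the Hodge condition on `Gr^W_n`, a descending induction on `p` shows
`W_n ∩ F^p ⊆ Σ_{p' ≥ p} I^{p',n-p'} + F^p ∩ W_{n-1}`, and an ascending induction on `n`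
then gives `F^r ∩ W_n ⊆ Σ_{p ≥ r, p+q ≤ n} I^{p,q}`. Both equalities follow because `W` and `F`
are exhaustive; the reverse inclusions are immediate from `I^{p,q} ⊆ W_{p+q} ∩ F^p`.
-/

theorem Int.induction_of_forall_le {P : ℤ → Prop} {a : ℤ} (base : ∀ i ≤ a, P i)
    (step : ∀ m, P (m - 1) → P m) (m : ℤ) : P m :=
  m.inductionOn' a (base a le_rfl) (fun k _ ih => step (k + 1) (by simpa using ih))
    (fun k _ _ => base (k - 1) (by omega))

theorem Int.induction_of_forall_ge {P : ℤ → Prop} {b : ℤ} (base : ∀ i, b ≤ i → P i)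
    (step : ∀ m, P (m + 1) → P m) (m : ℤ) : P m := by
  simpa using Int.induction_of_forall_le (P := fun i => P (-i)) (a := -b)
    (fun i hi => base (-i) (by omega)) (fun m hm => step (-m) (by convert hm using 2; ring)) (-m)

namespace MHS

variable {V : Type*} [AddCommGroup V] [Module ℝ V]

theorem cx_mono {W₁ W₂ : Submodule ℝ V} (hW : W₁ ≤ W₂) : cx V W₁ ≤ cx V W₂ :=
  Submodule.span_mono (Set.image_mono hW)

theorem cx_bot : cx V (⊥ : Submodule ℝ V) = ⊥ := by
  simp [cx, incl]

theorem cx_top : cx V (⊤ : Submodule ℝ V) = ⊤ := by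
  rw [eq_top_iff]
  rintro x -
  induction x using TensorProduct.induction_on with
  | zero => exact zero_mem _
  | tmul c v =>
    have hv : (1 : ℂ) ⊗ₜ[ℝ] v ∈ cx V ⊤ := Submodule.subset_span ⟨v, trivial, rfl⟩
    simpa [TensorProduct.smul_tmul'] using Submodule.smul_mem _ c hv
  | add x y hx hy => exact add_mem hx hy

variable {W : ℤ → Submodule ℝ V} {F : ℤ → Submodule ℂ (ℂ ⊗[ℝ] V)}

theorem Ipq_le_cx_inf (p q : ℤ) : Ipq W F p q ≤ cx V (W (p + q)) ⊓ F p :=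
  inf_le_left

theorem cx_le_Lpq_sup (h : IsRMHS W F) (p q : ℤ) :
    ∀ m ≤ p + q - 1, cx V (W m) ≤ Lpq W F p q ⊔ (F p ⊓ cx V (W (p + q - 1))) := by
  obtain ⟨a, ha⟩ := h.w_bot
  refine Int.induction_of_forall_le (a := a) (fun m hm _ => by simp [ha m hm, cx_bot])
    fun m ih hm => ?_
  rw [← h.gr_sup m p]
  refine sup_le (le_sup_of_le_right (inf_le_inf_left _ (cx_mono (h.monoW hm))))
    (sup_le (le_sup_of_le_left ?_) (ih (by omega)))
  rcases hm.eq_or_lt with rfl | hlt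
  · rw [show p + q - 1 + 1 - p = q by ring, inf_comm]
    exact le_sup_of_le_left (inf_le_inf_right _ (cx_mono (h.monoW (by omega))))
  · refine le_sup_of_le_right (le_iSup₂_of_le (p + q - m) (by omega) ?_)
    rw [inf_comm, show p + q - (p + q - m) = m by ring,
      show q - (p + q - m) + 1 = m + 1 - p by ring]

theorem Rpq_inf_le_Ipq_sup (h : IsRMHS W F) (p q : ℤ) :
    Rpq W F p q ⊓ (((F q).map (conjC V) ⊓ cx V (W (p + q))) ⊔ cx V (W (p + q - 1))) ≤
      Ipq W F p q ⊔ (F p ⊓ cx V (W (p + q - 1))) := by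
  have hC : F p ⊓ cx V (W (p + q - 1)) ≤ Rpq W F p q := by
    rw [Rpq, inf_comm]
    exact inf_le_inf_right _ (cx_mono (h.monoW (by omega)))
  have hL : ((F q).map (conjC V) ⊓ cx V (W (p + q))) ⊔ cx V (W (p + q - 1)) ≤
      Lpq W F p q ⊔ (F p ⊓ cx V (W (p + q - 1))) :=
    sup_le (le_sup_of_le_left (le_sup_of_le_left (inf_comm _ _).le))
      (cx_le_Lpq_sup h p q _ le_rfl)
  calc _ ≤ Rpq W F p q ⊓ (Lpq W F p q ⊔ (F p ⊓ cx V (W (p + q - 1)))) :=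
        inf_le_inf_left _ hL
    _ = Ipq W F p q ⊔ (F p ⊓ cx V (W (p + q - 1))) := (inf_sup_assoc_of_le _ hC).symm

theorem cx_inf_le_iSup_Ipq_sup (h : IsRMHS W F) (n : ℤ) :
    ∀ p, cx V (W n) ⊓ F p ≤
      (⨆ (p' : ℤ) (_ : p ≤ p'), Ipq W F p' (n - p')) ⊔ (F p ⊓ cx V (W (n - 1))) := by
  obtain ⟨b, hb⟩ := h.f_bot
  refine Int.induction_of_forall_ge (b := b) (fun p hp => by simp [hb p hp]) fun p ih => ?_
  obtain ⟨q, rfl⟩ : ∃ q, n = p + q := ⟨n - p, by ring⟩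
  set J := (⨆ (p' : ℤ) (_ : p + 1 ≤ p'), Ipq W F p' (p + q - p')) ⊔
    (F (p + 1) ⊓ cx V (W (p + q - 1)))
  set M := ((F q).map (conjC V) ⊓ cx V (W (p + q))) ⊔ cx V (W (p + q - 1))
  have hJ : J ≤ Rpq W F p q := by
    refine sup_le (iSup₂_le fun p' hp' => (Ipq_le_cx_inf _ _).trans ?_) ?_
    · rw [show p' + (p + q - p') = p + q by ring]
      exact inf_le_inf_left _ (h.antiF (by omega))
    · rw [Rpq, inf_comm]
      exact inf_le_inf (cx_mono (h.monoW (by omega))) (h.antiF (by omega))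
  have hW : cx V (W (p + q)) ≤ M ⊔ J := by
    have := h.gr_sup (p + q) (p + 1)
    rw [show p + q + 1 - (p + 1) = q by ring, sup_comm] at this
    exact this.ge.trans (sup_le_sup_left ((inf_comm _ _).le.trans ih) _)
  calc cx V (W (p + q)) ⊓ F p = Rpq W F p q ⊓ cx V (W (p + q)) :=
      (inf_of_le_left inf_le_left).symm
    _ ≤ Rpq W F p q ⊓ (M ⊔ J) := inf_le_inf_left _ hW
    _ = Rpq W F p q ⊓ M ⊔ J := (inf_sup_assoc_of_le _ hJ).symm
    _ ≤ (Ipq W F p q ⊔ (F p ⊓ cx V (W (p + q - 1)))) ⊔ J :=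
      sup_le_sup_right (Rpq_inf_le_Ipq_sup h p q) _
    _ ≤ _ :=
      sup_le (sup_le_sup (le_iSup₂_of_le p le_rfl (by rw [add_sub_cancel_left])) le_rfl)
        (sup_le_sup (iSup₂_mono' fun p' hp' => ⟨p', by omega, le_rfl⟩)
          (inf_le_inf_right _ (h.antiF (by omega))))

theorem inf_cx_le_iSup_Ipq (h : IsRMHS W F) (r : ℤ) :
    ∀ n, F r ⊓ cx V (W n) ≤
      ⨆ (pq : ℤ × ℤ) (_ : r ≤ pq.1 ∧ pq.1 + pq.2 ≤ n), Ipq W F pq.1 pq.2 := by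
  obtain ⟨a, ha⟩ := h.w_bot
  refine Int.induction_of_forall_le (a := a) (fun n hn => by simp [ha n hn, cx_bot]) fun n ih => ?_
  rw [inf_comm]
  refine (cx_inf_le_iSup_Ipq_sup h n r).trans (sup_le ?_ (ih.trans ?_))
  · exact iSup₂_le fun p hp => le_iSup₂_of_le (p, n - p) ⟨hp, by simp⟩ le_rfl
  · exact iSup_mono fun pq => iSup_mono' fun hpq => ⟨⟨hpq.1, by omega⟩, le_rfl⟩

end MHS

theorem deligne_splitting_recovers_filtrations_general
    (V : Type*) [AddCommGroup V] [Module ℝ V]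
    (W : ℤ → Submodule ℝ V) (F : ℤ → Submodule ℂ (ℂ ⊗[ℝ] V))
    (h : MHS.IsRMHS W F) :
    (∀ i : ℤ, MHS.cx V (W i) =
      ⨆ pq : ℤ × ℤ, ⨆ _ : pq.1 + pq.2 ≤ i, MHS.Ipq W F pq.1 pq.2) ∧
    (∀ r : ℤ, F r =
      ⨆ pq : ℤ × ℤ, ⨆ _ : r ≤ pq.1, MHS.Ipq W F pq.1 pq.2) := by
  refine ⟨fun i => le_antisymm ?_ ?_, fun r => le_antisymm ?_ ?_⟩
  · obtain ⟨a, ha⟩ := h.f_top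
    calc MHS.cx V (W i) = F a ⊓ MHS.cx V (W i) := by rw [ha a le_rfl, top_inf_eq]
      _ ≤ _ := (MHS.inf_cx_le_iSup_Ipq h a i).trans
        (iSup_mono fun pq => iSup_mono' fun hpq => ⟨hpq.2, le_rfl⟩)
  · exact iSup₂_le fun pq hpq =>
      (MHS.Ipq_le_cx_inf _ _).trans (inf_le_left.trans (MHS.cx_mono (h.monoW hpq)))
  · obtain ⟨b, hb⟩ := h.w_top
    calc F r = F r ⊓ MHS.cx V (W b) := by rw [hb b le_rfl, MHS.cx_top, inf_top_eq]
      _ ≤ _ := (MHS.inf_cx_le_iSup_Ipq h r b).trans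
        (iSup_mono fun pq => iSup_mono' fun hpq => ⟨hpq.1, le_rfl⟩)
  · exact iSup₂_le fun pq hpq => (MHS.Ipq_le_cx_inf _ _).trans (inf_le_right.trans (h.antiF hpq))

/-- For an `ℝ`-mixed Hodge structure `(W, F)` on `V`, the
Deligne subspaces recover both filtrations:
`W_i ⊗ ℂ = ⊕_{p+q ≤ i} I^{p,q}` and `F^r = ⊕_{p ≥ r} I^{p,q}`. -/
theorem deligne_splitting_recovers_filtrations
    (V : Type*) [AddCommGroup V] [Module ℝ V] [FiniteDimensional ℝ V]
    (W : ℤ → Submodule ℝ V) (F : ℤ → Submodule ℂ (ℂ ⊗[ℝ] V))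
    (h : MHS.IsRMHS W F) :
    (∀ i : ℤ, MHS.cx V (W i) =
      ⨆ pq : ℤ × ℤ, ⨆ _ : pq.1 + pq.2 ≤ i, MHS.Ipq W F pq.1 pq.2) ∧
    (∀ r : ℤ, F r =
      ⨆ pq : ℤ × ℤ, ⨆ _ : r ≤ pq.1, MHS.Ipq W F pq.1 pq.2) :=
  deligne_splitting_recovers_filtrations_general V W F h
end
end

section
/- Suppose V_ℂ is the internal direct sum V_ℂ = ⊕_{(p,q)} V^{p,q} of complex subspaces indexed by pairs of integers, with only finitely many nonzero, such that (i) for every integer i the subspace ⊕_{p+q ≤ i} V^{p,q} is stable under σ (equivalently, is the complexification of a real subspace W_i ⊆ V), and (ii) σ(V^{p,q}) ⊆ V^{q,p} + ⊕_{r+s < p+q} V^{r,s} for all p,q. Define W_i := (⊕_{p+q ≤ i} V^{p,q}) ∩ (V ⊗ 1) and F^r := ⊕_{p ≥ r} V^{p,q}. Then (W_∗, F^∗) is an ℝ-mixed Hodge structure on V. -/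
/-!
Every subspace in sight is a partial sum `⨆_{P(p,q)} V^{p,q}` of the bigrading, and for an
independent family such sums meet and join like the predicates `P` themselves. Conjugation
preserves the weight sums and, modulo lower weight, exchanges `V^{p,q}` and `V^{q,p}`; hence
modulo `W_{n-1}`, both `F^p ∩ W_n` and `σ(F^q) ∩ W_n` are again partial sums, over
`r ≥ p, r + s ≤ n` and over `s ≥ q, r + s ≤ n` respectively. The Hodge conditions on `Gr^W_n`
then reduce to two facts about integers: `r ≥ p`, `s ≥ n + 1 - p` forces `r + s > n`, and
`r + s = n` forces `r ≥ p` or `s ≥ n + 1 - p`. A conjugation-stable complex subspace is the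
complexification of its real points, which identifies `W_n ⊗ ℂ` with the weight sum.
-/

open TensorProduct

noncomputable section

section Lattice

variable {ι α : Type*} [CompleteLattice α] {f : ι → α}

theorem biSup_congr_iff {P Q : ι → Prop} (h : ∀ i, P i ↔ Q i) :
    ⨆ i, ⨆ _ : P i, f i = ⨆ i, ⨆ _ : Q i, f i :=
  (biSup_mono fun i => (h i).1).antisymm (biSup_mono fun i => (h i).2)

theorem biSup_sup_biSup (P Q : ι → Prop) :
    (⨆ i, ⨆ _ : P i, f i) ⊔ ⨆ i, ⨆ _ : Q i, f i = ⨆ i, ⨆ _ : P i ∨ Q i, f i := by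
  simp only [iSup_or, iSup_sup_eq]

theorem iSupIndep.biSup_inf_biSup [IsModularLattice α] [IsCompactlyGenerated α]
    (hf : iSupIndep f) (P Q : ι → Prop) :
    (⨆ i, ⨆ _ : P i, f i) ⊓ ⨆ i, ⨆ _ : Q i, f i = ⨆ i, ⨆ _ : P i ∧ Q i, f i := by
  have hsplit : ⨆ i, ⨆ _ : P i, f i =
      (⨆ i, ⨆ _ : P i ∧ Q i, f i) ⊔ ⨆ i, ⨆ _ : P i ∧ ¬ Q i, f i := by
    rw [biSup_sup_biSup]
    exact biSup_congr_iff fun i => by tauto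
  have hdisj : Disjoint (⨆ i, ⨆ _ : P i ∧ ¬ Q i, f i) (⨆ i, ⨆ _ : Q i, f i) :=
    hf.disjoint_biSup_biSup (s := {i | P i ∧ ¬ Q i}) (t := {i | Q i})
      (Set.disjoint_left.mpr fun _ hs ht => hs.2 ht)
  rw [hsplit, sup_inf_assoc_of_le _ (biSup_mono fun _ h => h.2), hdisj.eq_bot, sup_bot_eq]

theorem biSup_eq_iSup_of_ne_bot {P : ι → Prop} (h : ∀ i, f i ≠ ⊥ → P i) :
    ⨆ i, ⨆ _ : P i, f i = ⨆ i, f i := by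
  refine (iSup₂_le_iSup P f).antisymm (iSup_le fun i => ?_)
  by_cases hi : f i = ⊥
  · exact hi.le.trans bot_le
  · exact le_iSup₂_of_le i (h i hi) le_rfl

theorem exists_biSup_le_eq_bot (hfin : {i | f i ≠ ⊥}.Finite) (w : ι → ℤ) :
    ∃ a : ℤ, ∀ n ≤ a, ⨆ i, ⨆ _ : w i ≤ n, f i = ⊥ := by
  obtain ⟨a, ha⟩ := (hfin.image w).bddBelow
  exact ⟨a - 1, fun n hn => iSup₂_eq_bot.mpr fun i hi => by
    by_contra h; linarith [ha ⟨i, h, rfl⟩]⟩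

theorem exists_biSup_le_eq_iSup (hfin : {i | f i ≠ ⊥}.Finite) (w : ι → ℤ) :
    ∃ b : ℤ, ∀ n, b ≤ n → ⨆ i, ⨆ _ : w i ≤ n, f i = ⨆ i, f i := by
  obtain ⟨b, hb⟩ := (hfin.image w).bddAbove
  exact ⟨b, fun n hn => biSup_eq_iSup_of_ne_bot fun i h => (hb ⟨i, h, rfl⟩).trans hn⟩

theorem exists_biSup_ge_eq_iSup (hfin : {i | f i ≠ ⊥}.Finite) (w : ι → ℤ) :
    ∃ a : ℤ, ∀ n ≤ a, ⨆ i, ⨆ _ : n ≤ w i, f i = ⨆ i, f i := by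
  obtain ⟨a, ha⟩ := (hfin.image w).bddBelow
  exact ⟨a, fun n hn => biSup_eq_iSup_of_ne_bot fun i h => hn.trans (ha ⟨i, h, rfl⟩)⟩

theorem exists_biSup_ge_eq_bot (hfin : {i | f i ≠ ⊥}.Finite) (w : ι → ℤ) :
    ∃ b : ℤ, ∀ n, b ≤ n → ⨆ i, ⨆ _ : n ≤ w i, f i = ⊥ := by
  obtain ⟨b, hb⟩ := (hfin.image w).bddAbove
  exact ⟨b + 1, fun n hn => iSup₂_eq_bot.mpr fun i hi => by
    by_contra h; linarith [hb ⟨i, h, rfl⟩]⟩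

end Lattice

section Bigrading

variable {R M : Type*} [Ring R] [AddCommGroup M] [Module R M] {τ : R →+* R}
  [RingHomSurjective τ] {σ : M →ₛₗ[τ] M} {A : ℤ × ℤ → Submodule R M}

theorem Submodule.map_map_of_involutive (hσ : Function.Involutive σ) (U : Submodule R M) :
    (U.map σ).map σ = U := by
  ext x
  constructor
  · rintro ⟨_, ⟨u, hu, rfl⟩, rfl⟩
    rwa [hσ u]
  · exact fun hx => ⟨σ x, ⟨x, hx, rfl⟩, hσ x⟩

structure IsConjCompatible (σ : M →ₛₗ[τ] M) (A : ℤ × ℤ → Submodule R M) : Prop where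
  map_weight_eq : ∀ n : ℤ, (⨆ pq : ℤ × ℤ, ⨆ _ : pq.1 + pq.2 ≤ n, A pq).map σ =
    ⨆ pq : ℤ × ℤ, ⨆ _ : pq.1 + pq.2 ≤ n, A pq
  map_le : ∀ p q : ℤ, (A (p, q)).map σ ≤ A (q, p) ⊔ ⨆ rs : ℤ × ℤ, ⨆ _ : rs.1 + rs.2 < p + q, A rs

namespace IsConjCompatible

theorem le_map_sup (hA : IsConjCompatible σ A) (hσ : Function.Involutive σ) (r s : ℤ) :
    A (r, s) ≤ (A (s, r)).map σ ⊔ ⨆ pq : ℤ × ℤ, ⨆ _ : pq.1 + pq.2 ≤ r + s - 1, A pq :=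
  calc A (r, s) = ((A (r, s)).map σ).map σ := (Submodule.map_map_of_involutive hσ _).symm
    _ ≤ (A (s, r) ⊔ ⨆ pq : ℤ × ℤ, ⨆ _ : pq.1 + pq.2 < r + s, A pq).map σ :=
      Submodule.map_mono (hA.map_le r s)
    _ = (A (s, r)).map σ ⊔ ⨆ pq : ℤ × ℤ, ⨆ _ : pq.1 + pq.2 ≤ r + s - 1, A pq := by
      rw [Submodule.map_sup, biSup_congr_iff fun _ => Int.le_sub_one_iff.symm, hA.map_weight_eq]

theorem map_inf_le (hA : IsConjCompatible σ A) (hσ : Function.Involutive σ) (hindep : iSupIndep A)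
    (n q : ℤ) :
    (⨆ pq : ℤ × ℤ, ⨆ _ : q ≤ pq.1, A pq).map σ ⊓ ⨆ pq : ℤ × ℤ, ⨆ _ : pq.1 + pq.2 ≤ n, A pq ≤
      ⨆ pq : ℤ × ℤ, ⨆ _ : q ≤ pq.2 ∧ pq.1 + pq.2 ≤ n ∨ pq.1 + pq.2 ≤ n - 1, A pq := by
  rw [← hA.map_weight_eq n, ← Submodule.map_inf _ hσ.injective, hindep.biSup_inf_biSup,
    Submodule.map_iSup]
  refine iSup_le fun ⟨r, s⟩ => ?_
  rw [Submodule.map_iSup]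
  refine iSup_le fun ⟨hq, hn⟩ => (hA.map_le r s).trans (sup_le ?_ ?_)
  · exact le_iSup₂_of_le (s, r) (Or.inl ⟨hq, by omega⟩) le_rfl
  · exact biSup_mono fun _ h => Or.inr (by omega)

theorem le_map_inf_sup (hA : IsConjCompatible σ A) (hσ : Function.Involutive σ) (n q : ℤ) :
    ⨆ pq : ℤ × ℤ, ⨆ _ : q ≤ pq.2 ∧ pq.1 + pq.2 ≤ n, A pq ≤
      ((⨆ pq : ℤ × ℤ, ⨆ _ : q ≤ pq.1, A pq).map σ ⊓ ⨆ pq : ℤ × ℤ, ⨆ _ : pq.1 + pq.2 ≤ n, A pq) ⊔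
        ⨆ pq : ℤ × ℤ, ⨆ _ : pq.1 + pq.2 ≤ n - 1, A pq := by
  refine iSup₂_le fun ⟨r, s⟩ ⟨hq, hn⟩ => ?_
  rw [inf_comm, inf_sup_assoc_of_le _ (biSup_mono fun _ h => by omega)]
  refine le_inf (le_iSup₂_of_le (r, s) hn le_rfl) ((hA.le_map_sup hσ r s).trans ?_)
  exact sup_le_sup (Submodule.map_mono (le_iSup₂_of_le (s, r) hq le_rfl))
    (biSup_mono fun _ h => by omega)

theorem map_inf_sup_eq (hA : IsConjCompatible σ A) (hσ : Function.Involutive σ)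
    (hindep : iSupIndep A) (n q : ℤ) :
    ((⨆ pq : ℤ × ℤ, ⨆ _ : q ≤ pq.1, A pq).map σ ⊓ ⨆ pq : ℤ × ℤ, ⨆ _ : pq.1 + pq.2 ≤ n, A pq) ⊔
        ⨆ pq : ℤ × ℤ, ⨆ _ : pq.1 + pq.2 ≤ n - 1, A pq =
      ⨆ pq : ℤ × ℤ, ⨆ _ : q ≤ pq.2 ∧ pq.1 + pq.2 ≤ n ∨ pq.1 + pq.2 ≤ n - 1, A pq := by
  refine le_antisymm (sup_le (hA.map_inf_le hσ hindep n q) (biSup_mono fun _ => Or.inr)) ?_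
  rw [← biSup_sup_biSup]
  exact sup_le (hA.le_map_inf_sup hσ n q) le_sup_right

theorem gr_inf (hA : IsConjCompatible σ A) (hσ : Function.Involutive σ) (hindep : iSupIndep A)
    (n p : ℤ) :
    ((⨆ pq : ℤ × ℤ, ⨆ _ : p ≤ pq.1, A pq) ⊓ (⨆ pq : ℤ × ℤ, ⨆ _ : pq.1 + pq.2 ≤ n, A pq) ⊔
        ⨆ pq : ℤ × ℤ, ⨆ _ : pq.1 + pq.2 ≤ n - 1, A pq) ⊓
      ((⨆ pq : ℤ × ℤ, ⨆ _ : n + 1 - p ≤ pq.1, A pq).map σ ⊓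
          (⨆ pq : ℤ × ℤ, ⨆ _ : pq.1 + pq.2 ≤ n, A pq) ⊔
        ⨆ pq : ℤ × ℤ, ⨆ _ : pq.1 + pq.2 ≤ n - 1, A pq) =
      ⨆ pq : ℤ × ℤ, ⨆ _ : pq.1 + pq.2 ≤ n - 1, A pq := by
  rw [hA.map_inf_sup_eq hσ hindep, hindep.biSup_inf_biSup, biSup_sup_biSup,
    hindep.biSup_inf_biSup]
  exact biSup_congr_iff fun _ => by omega

theorem gr_sup (hA : IsConjCompatible σ A) (hσ : Function.Involutive σ) (hindep : iSupIndep A)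
    (n p : ℤ) :
    (⨆ pq : ℤ × ℤ, ⨆ _ : p ≤ pq.1, A pq) ⊓ (⨆ pq : ℤ × ℤ, ⨆ _ : pq.1 + pq.2 ≤ n, A pq) ⊔
      ((⨆ pq : ℤ × ℤ, ⨆ _ : n + 1 - p ≤ pq.1, A pq).map σ ⊓
          (⨆ pq : ℤ × ℤ, ⨆ _ : pq.1 + pq.2 ≤ n, A pq) ⊔
        ⨆ pq : ℤ × ℤ, ⨆ _ : pq.1 + pq.2 ≤ n - 1, A pq) =
      ⨆ pq : ℤ × ℤ, ⨆ _ : pq.1 + pq.2 ≤ n, A pq := by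
  rw [hA.map_inf_sup_eq hσ hindep, hindep.biSup_inf_biSup, biSup_sup_biSup]
  exact biSup_congr_iff fun _ => by omega

end IsConjCompatible

end Bigrading

namespace MHS

variable {V : Type*} [AddCommGroup V] [Module ℝ V]

@[simp] theorem conjC_tmul (c : ℂ) (v : V) : conjC V (c ⊗ₜ v) = starRingEnd ℂ c ⊗ₜ v := rfl

theorem conjC_involutive : Function.Involutive (conjC V) := fun z => by
  induction z using TensorProduct.induction_on with
  | zero => simp
  | tmul c v => simp
  | add x y hx hy => rw [map_add, map_add, hx, hy]

def re : ℂ ⊗[ℝ] V →ₗ[ℝ] V := TensorProduct.lift ((LinearMap.lsmul ℝ V).comp Complex.reLm)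

def im : ℂ ⊗[ℝ] V →ₗ[ℝ] V := TensorProduct.lift ((LinearMap.lsmul ℝ V).comp Complex.imLm)

theorem incl_re (z : ℂ ⊗[ℝ] V) : incl V (re z) = (2 : ℂ)⁻¹ • (z + conjC V z) := by
  induction z using TensorProduct.induction_on with
  | zero => simp
  | tmul c v =>
    have hc : (2 : ℂ)⁻¹ * (c + starRingEnd ℂ c) = c.re := by
      rw [Complex.add_conj]; push_cast; field_simp
    rw [conjC_tmul, ← add_tmul, smul_tmul', smul_eq_mul, hc, ← mul_one (c.re : ℂ),
      ← Complex.real_smul, smul_tmul]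
    rfl
  | add x y hx hy => rw [map_add, map_add, hx, hy, map_add]; module

theorem incl_im (z : ℂ ⊗[ℝ] V) :
    incl V (im z) = (2 : ℂ)⁻¹ • Complex.I • (conjC V z - z) := by
  induction z using TensorProduct.induction_on with
  | zero => simp
  | tmul c v =>
    have hc : (2 : ℂ)⁻¹ * (Complex.I * (starRingEnd ℂ c - c)) = c.im := by
      rw [← neg_sub, Complex.sub_conj]; push_cast; ring_nf; rw [Complex.I_sq]; ring
    rw [conjC_tmul, ← sub_tmul, smul_tmul', smul_tmul', smul_eq_mul, smul_eq_mul, hc,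
      ← mul_one (c.im : ℂ), ← Complex.real_smul, smul_tmul]
    rfl
  | add x y hx hy => rw [map_add, map_add, hx, hy, map_add]; module

theorem incl_re_add_I_smul_incl_im (z : ℂ ⊗[ℝ] V) :
    incl V (re z) + Complex.I • incl V (im z) = z := by
  have hI : Complex.I * 2⁻¹ * Complex.I = -2⁻¹ := by
    rw [mul_right_comm, Complex.I_mul_I]; ring
  rw [incl_re, incl_im, smul_smul, smul_smul, hI]
  module

theorem incl_injective : Function.Injective (incl V) :=
  Function.LeftInverse.injective (g := re) fun v => by simp [incl, re]

theorem cx_comap_incl_eq {U : Submodule ℂ (ℂ ⊗[ℝ] V)} (hU : U.map (conjC V) = U) :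
    cx V ((U.restrictScalars ℝ).comap (incl V)) = U := by
  refine le_antisymm (Submodule.span_le.mpr ?_) fun u hu => ?_
  · rintro _ ⟨v, hv, rfl⟩
    exact hv
  have hσu : conjC V u ∈ U := hU ▸ Submodule.mem_map_of_mem hu
  rw [← incl_re_add_I_smul_incl_im u]
  refine add_mem (Submodule.subset_span ⟨_, ?_, rfl⟩)
    (Submodule.smul_mem _ _ (Submodule.subset_span ⟨_, ?_, rfl⟩))
  · show incl V (re u) ∈ U
    rw [incl_re]
    exact U.smul_mem _ (U.add_mem hu hσu)
  · show incl V (im u) ∈ U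
    rw [incl_im]
    exact U.smul_mem _ (U.smul_mem _ (U.sub_mem hσu hu))

end MHS

theorem bigrading_gives_RMHS_general
    (V : Type*) [AddCommGroup V] [Module ℝ V]
    (Vpq : ℤ × ℤ → Submodule ℂ (ℂ ⊗[ℝ] V))
    (hfin : {pq : ℤ × ℤ | Vpq pq ≠ ⊥}.Finite)
    (hinternal : DirectSum.IsInternal Vpq)
    (hstable : ∀ i : ℤ,
      (⨆ pq : ℤ × ℤ, ⨆ _ : pq.1 + pq.2 ≤ i, Vpq pq).map (MHS.conjC V) =
        ⨆ pq : ℤ × ℤ, ⨆ _ : pq.1 + pq.2 ≤ i, Vpq pq)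
    (hconj : ∀ p q : ℤ, (Vpq (p, q)).map (MHS.conjC V) ≤
      Vpq (q, p) ⊔ ⨆ rs : ℤ × ℤ, ⨆ _ : rs.1 + rs.2 < p + q, Vpq rs)
    (W : ℤ → Submodule ℝ V)
    (hW : ∀ i : ℤ, W i =
      ((⨆ pq : ℤ × ℤ, ⨆ _ : pq.1 + pq.2 ≤ i, Vpq pq).restrictScalars ℝ).comap
        (MHS.incl V))
    (F : ℤ → Submodule ℂ (ℂ ⊗[ℝ] V))
    (hF : ∀ r : ℤ, F r = ⨆ pq : ℤ × ℤ, ⨆ _ : r ≤ pq.1, Vpq pq) :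
    MHS.IsRMHS W F := by
  have hA : IsConjCompatible (MHS.conjC V) Vpq := ⟨hstable, hconj⟩
  have hσ := MHS.conjC_involutive (V := V)
  have hindep := hinternal.submodule_iSupIndep
  have htop := hinternal.submodule_iSup_eq_top
  have hcx : ∀ n, MHS.cx V (W n) = ⨆ pq : ℤ × ℤ, ⨆ _ : pq.1 + pq.2 ≤ n, Vpq pq := fun n => by
    rw [hW n, MHS.cx_comap_incl_eq (hstable n)]
  refine
    { monoW := fun i j hij => by
        rw [hW, hW]
        exact Submodule.comap_mono (Submodule.restrictScalars_mono ℝ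
          (biSup_mono fun _ h => le_trans h hij))
      antiF := fun i j hij => by rw [hF, hF]; exact biSup_mono fun _ h => hij.trans h
      w_bot := (exists_biSup_le_eq_bot hfin fun pq => pq.1 + pq.2).imp fun a ha i hi => by
        rw [hW, ha i hi, Submodule.restrictScalars_bot, Submodule.comap_bot,
          LinearMap.ker_eq_bot.mpr MHS.incl_injective]
      w_top := (exists_biSup_le_eq_iSup hfin fun pq => pq.1 + pq.2).imp fun b hb i hi => by
        rw [hW, hb i hi, htop, Submodule.restrictScalars_top, Submodule.comap_top]
      f_top := (exists_biSup_ge_eq_iSup hfin Prod.fst).imp fun a ha p hp => by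
        rw [hF, ha p hp, htop]
      f_bot := (exists_biSup_ge_eq_bot hfin Prod.fst).imp fun b hb p hp => by rw [hF, hb p hp]
      gr_inf := fun n p => by simpa only [hF, hcx] using hA.gr_inf hσ hindep n p
      gr_sup := fun n p => by simpa only [hF, hcx] using hA.gr_sup hσ hindep n p }

/-- A bigrading `V_ℂ = ⊕ V^{p,q}` (finitely many nonzero)
whose partial sums `⊕_{p+q ≤ i} V^{p,q}` are stable under conjugation and with
`σ(V^{p,q}) ⊆ V^{q,p} + ⊕_{r+s < p+q} V^{r,s}` determines an `ℝ`-mixed Hodge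
structure via `W_i := (⊕_{p+q ≤ i} V^{p,q}) ∩ (V ⊗ 1)` and
`F^r := ⊕_{p ≥ r} V^{p,q}`. -/
theorem bigrading_gives_RMHS
    (V : Type*) [AddCommGroup V] [Module ℝ V] [FiniteDimensional ℝ V]
    (Vpq : ℤ × ℤ → Submodule ℂ (ℂ ⊗[ℝ] V))
    (hfin : {pq : ℤ × ℤ | Vpq pq ≠ ⊥}.Finite)
    (hinternal : DirectSum.IsInternal Vpq)
    (hstable : ∀ i : ℤ,
      (⨆ pq : ℤ × ℤ, ⨆ _ : pq.1 + pq.2 ≤ i, Vpq pq).map (MHS.conjC V) =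
        ⨆ pq : ℤ × ℤ, ⨆ _ : pq.1 + pq.2 ≤ i, Vpq pq)
    (hconj : ∀ p q : ℤ, (Vpq (p, q)).map (MHS.conjC V) ≤
      Vpq (q, p) ⊔ ⨆ rs : ℤ × ℤ, ⨆ _ : rs.1 + rs.2 < p + q, Vpq rs)
    (W : ℤ → Submodule ℝ V)
    (hW : ∀ i : ℤ, W i =
      ((⨆ pq : ℤ × ℤ, ⨆ _ : pq.1 + pq.2 ≤ i, Vpq pq).restrictScalars ℝ).comap
        (MHS.incl V))
    (F : ℤ → Submodule ℂ (ℂ ⊗[ℝ] V))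
    (hF : ∀ r : ℤ, F r = ⨆ pq : ℤ × ℤ, ⨆ _ : r ≤ pq.1, Vpq pq) :
    MHS.IsRMHS W F :=
  bigrading_gives_RMHS_general V Vpq hfin hinternal hstable hconj W hW F hF
end
end
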